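/- arXiv:2002.07247 — 4 statements merged into one kernel-verified Lean document; each statement's English description precedes it below -/
import Mathlib

section
/- Under the setting of the half-space problem, with v = uₓₙ > 0, w = uₓₙₓₙ, z = (1+xₙ)v, and ξ = w/z, if additionally f'' ≥ 0 on (0,∞), then ξ satisfies the differential inequality -Δξ ≥ 2ξ² + 2(∇z/z)·∇ξ on Ω. -/
open Metric MeasureTheory Set

noncomputable def pd {n : ℕ} (i : Fin n) (u : EuclideanSpace ℝ (Fin n) → ℝ) :
    EuclideanSpace ℝ (Fin n) → ℝ :=
  fun x => fderiv ℝ u x (EuclideanSpace.single i 1)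

noncomputable def lap {n : ℕ} (u : EuclideanSpace ℝ (Fin n) → ℝ)
    (x : EuclideanSpace ℝ (Fin n)) : ℝ :=
  ∑ i, pd i (pd i u) x

/-!
Write `w = ξ z`. The product rule gives `Δw = z Δξ + 2 ∇ξ · ∇z + ξ Δz`. Differentiating
`-Δu = f(u)` in `xₙ` yields `-Δw = f'(u) w + f''(u) v²`, and `-Δz = f'(u) z - 2w` since
`Δ((1 + xₙ) v) = 2 vₓₙ + (1 + xₙ) Δv`. Substituting, the `f'(u)` terms cancel and
`-z Δξ = f''(u) v² + 2 ∇ξ · ∇z + 2 ξ² z`; dividing by `z > 0` and dropping `f''(u) v² ≥ 0`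
gives the inequality.
-/

open Topology

variable {m : ℕ} {s : Set (EuclideanSpace ℝ (Fin m))} {x : EuclideanSpace ℝ (Fin m)}
  {g h : EuclideanSpace ℝ (Fin m) → ℝ}

lemma pd_eq_of_hasFDerivAt {g' : EuclideanSpace ℝ (Fin m) →L[ℝ] ℝ} (i : Fin m)
    (hg : HasFDerivAt g g' x) : pd i g x = g' (EuclideanSpace.single i 1) := by
  rw [pd, hg.fderiv]

lemma Filter.EventuallyEq.pd_eq (i : Fin m) (hgh : g =ᶠ[𝓝 x] h) : pd i g x = pd i h x := by
  rw [pd, pd, hgh.fderiv_eq]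

lemma pd_add (i : Fin m) (hg : DifferentiableAt ℝ g x) (hh : DifferentiableAt ℝ h x) :
    pd i (fun y => g y + h y) x = pd i g x + pd i h x := by
  rw [pd_eq_of_hasFDerivAt i (hg.hasFDerivAt.fun_add hh.hasFDerivAt)]
  simp [pd]

lemma pd_mul (i : Fin m) (hg : DifferentiableAt ℝ g x) (hh : DifferentiableAt ℝ h x) :
    pd i (fun y => g y * h y) x = pd i g x * h x + g x * pd i h x := by
  rw [pd_eq_of_hasFDerivAt i (hg.hasFDerivAt.fun_mul hh.hasFDerivAt)]
  simp only [add_apply, smul_apply, smul_eq_mul, pd]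
  ring

lemma pd_neg (i : Fin m) : pd i (fun y => -g y) x = -pd i g x := by
  simp [pd, fderiv_fun_neg]

lemma pd_comp (i : Fin m) {φ : ℝ → ℝ} (hφ : DifferentiableAt ℝ φ (g x))
    (hg : DifferentiableAt ℝ g x) :
    pd i (fun y => φ (g y)) x = deriv φ (g x) * pd i g x := by
  rw [pd_eq_of_hasFDerivAt (g := fun y => φ (g y)) i
    (hφ.hasDerivAt.comp_hasFDerivAt x hg.hasFDerivAt)]
  simp [pd]

lemma pd_sum {ι : Type*} (t : Finset ι) {F : ι → EuclideanSpace ℝ (Fin m) → ℝ}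
    (hF : ∀ j ∈ t, DifferentiableAt ℝ (F j) x) (i : Fin m) :
    pd i (fun y => ∑ j ∈ t, F j y) x = ∑ j ∈ t, pd i (F j) x := by
  rw [pd_eq_of_hasFDerivAt i (HasFDerivAt.fun_sum fun j hj => (hF j hj).hasFDerivAt)]
  simp [pd]

lemma pd_const (i : Fin m) (c : ℝ) : pd i (fun _ => c) x = 0 := by
  simp [pd]

lemma pd_one_add_coord (i j : Fin m) :
    pd i (fun y : EuclideanSpace ℝ (Fin m) => 1 + y j) = fun _ => if j = i then 1 else 0 := by
  ext x
  rw [pd_eq_of_hasFDerivAt (g := fun y => 1 + y j) i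
    ((EuclideanSpace.proj (𝕜 := ℝ) j).hasFDerivAt.const_add (1 : ℝ))]
  simp [PiLp.single_apply]

lemma ContDiffOn.pd {n k : WithTop ℕ∞} (hg : ContDiffOn ℝ n g s) (hs : IsOpen s)
    (hkn : k + 1 ≤ n) (i : Fin m) : ContDiffOn ℝ k (pd i g) s :=
  (hg.fderiv_of_isOpen hs hkn).clm_apply contDiffOn_const

lemma ContDiffOn.differentiableAt_of_isOpen {E F : Type*} [NormedAddCommGroup E]
    [NormedSpace ℝ E] [NormedAddCommGroup F] [NormedSpace ℝ F] {n : WithTop ℕ∞} {φ : E → F}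
    {t : Set E} {a : E} (hφ : ContDiffOn ℝ n φ t) (ht : IsOpen t) (hn : n ≠ 0) (ha : a ∈ t) :
    DifferentiableAt ℝ φ a :=
  (hφ.differentiableOn hn).differentiableAt (ht.mem_nhds ha)

lemma pd_pd_eq_fderiv_fderiv (hg : DifferentiableAt ℝ (fderiv ℝ g) x) (i j : Fin m) :
    pd i (pd j g) x =
      fderiv ℝ (fderiv ℝ g) x (EuclideanSpace.single i 1) (EuclideanSpace.single j 1) := by
  rw [pd_eq_of_hasFDerivAt (g := pd j g) i
    (hg.hasFDerivAt.clm_apply (hasFDerivAt_const (EuclideanSpace.single j 1) x))]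
  simp

lemma pd_comm (hg : ContDiffOn ℝ 2 g s) (hs : IsOpen s) (hx : x ∈ s) (i j : Fin m) :
    pd i (pd j g) x = pd j (pd i g) x := by
  have hg1 : ContDiffOn ℝ 1 (fderiv ℝ g) s := hg.fderiv_of_isOpen hs (by norm_num)
  have hg' := hg1.differentiableAt_of_isOpen hs one_ne_zero hx
  rw [pd_pd_eq_fderiv_fderiv hg', pd_pd_eq_fderiv_fderiv hg',
    (hg.contDiffAt (hs.mem_nhds hx)).isSymmSndFDerivAt (by simp)]

lemma Filter.EventuallyEq.lap_eq (hgh : g =ᶠ[𝓝 x] h) : lap g x = lap h x :=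
  Finset.sum_congr rfl fun i _ =>
    Filter.EventuallyEq.pd_eq i (hgh.eventuallyEq_nhds.mono fun _ hy => hy.pd_eq i)

lemma lap_pd_comm (hg : ContDiffOn ℝ 3 g s) (hs : IsOpen s) (hx : x ∈ s) (i : Fin m) :
    lap (pd i g) x = pd i (lap g) x := by
  have hpd : ∀ j, ContDiffOn ℝ 2 (pd j g) s := fun j => hg.pd hs (by norm_num) j
  unfold lap
  rw [pd_sum _ fun j _ => ((hpd j).pd hs (k := 1) (by norm_num) j).differentiableAt_of_isOpen
    hs one_ne_zero hx]
  refine Finset.sum_congr rfl fun j _ => ?_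
  calc pd j (pd j (pd i g)) x = pd j (pd i (pd j g)) x :=
        (Filter.eventuallyEq_of_mem (hs.mem_nhds hx) fun y hy =>
          pd_comm (hg.of_le (by norm_num)) hs hy j i).pd_eq j
    _ = pd i (pd j (pd j g)) x := pd_comm (hpd j) hs hx j i

lemma gradient_apply_eq_pd (g : EuclideanSpace ℝ (Fin m) → ℝ) (x : EuclideanSpace ℝ (Fin m))
    (i : Fin m) : gradient g x i = pd i g x := by
  have := inner_gradient_left (𝕜 := ℝ) (f := g) (x := x) (y := EuclideanSpace.single i 1)
  rw [EuclideanSpace.inner_single_right] at this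
  simpa [pd] using this

lemma inner_gradient_eq_sum_pd (g h : EuclideanSpace ℝ (Fin m) → ℝ)
    (x : EuclideanSpace ℝ (Fin m)) :
    inner ℝ (gradient g x) (gradient h x) = ∑ i, pd i g x * pd i h x := by
  simp only [PiLp.inner_apply, gradient_apply_eq_pd, RCLike.inner_apply, conj_trivial, mul_comm]

lemma lap_mul (hg : ContDiffOn ℝ 2 g s) (hh : ContDiffOn ℝ 2 h s) (hs : IsOpen s) (hx : x ∈ s) :
    lap (fun y => g y * h y) x =
      lap g x * h x + 2 * inner ℝ (gradient g x) (gradient h x) + g x * lap h x := by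
  have hdg : ∀ y ∈ s, DifferentiableAt ℝ g y := fun y hy =>
    hg.differentiableAt_of_isOpen hs two_ne_zero hy
  have hdh : ∀ y ∈ s, DifferentiableAt ℝ h y := fun y hy =>
    hh.differentiableAt_of_isOpen hs two_ne_zero hy
  have key : ∀ i, pd i (pd i fun y => g y * h y) x =
      pd i (pd i g) x * h x + 2 * (pd i g x * pd i h x) + g x * pd i (pd i h) x := by
    intro i
    have hpg := (hg.pd hs (k := 1) (by norm_num) i).differentiableAt_of_isOpen hs one_ne_zero hx
    have hph := (hh.pd hs (k := 1) (by norm_num) i).differentiableAt_of_isOpen hs one_ne_zero hx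
    have e : pd i (fun y => g y * h y) =ᶠ[𝓝 x] fun y => pd i g y * h y + g y * pd i h y :=
      Filter.eventuallyEq_of_mem (hs.mem_nhds hx) fun y hy => pd_mul i (hdg y hy) (hdh y hy)
    rw [e.pd_eq, pd_add i (hpg.fun_mul (hdh x hx)) ((hdg x hx).fun_mul hph),
      pd_mul i hpg (hdh x hx), pd_mul i (hdg x hx) hph]
    ring
  unfold lap
  rw [Finset.sum_congr rfl fun i _ => key i, inner_gradient_eq_sum_pd, Finset.sum_add_distrib,
    Finset.sum_add_distrib, ← Finset.sum_mul, ← Finset.mul_sum, ← Finset.mul_sum]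

lemma contDiff_one_add_coord {k : WithTop ℕ∞} (i : Fin m) :
    ContDiff ℝ k fun y : EuclideanSpace ℝ (Fin m) => 1 + y i := by
  fun_prop

lemma lap_one_add_coord_mul (hg : ContDiffOn ℝ 2 g s) (hs : IsOpen s) (hx : x ∈ s) (i : Fin m) :
    lap (fun y => (1 + y i) * g y) x = 2 * pd i g x + (1 + x i) * lap g x := by
  rw [lap_mul (contDiff_one_add_coord i).contDiffOn hg hs hx, inner_gradient_eq_sum_pd]
  simp [lap, pd_one_add_coord, pd_const]

section Semilinear

variable {f : ℝ → ℝ} {u : EuclideanSpace ℝ (Fin m) → ℝ}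

lemma neg_lap_pd (hu : ContDiffOn ℝ 3 u s) (hs : IsOpen s) (hf : DifferentiableAt ℝ f (u x))
    (heq : ∀ y ∈ s, -lap u y = f (u y)) (hx : x ∈ s) (i : Fin m) :
    -lap (pd i u) x = deriv f (u x) * pd i u x := by
  have e : lap u =ᶠ[𝓝 x] fun y => -f (u y) :=
    Filter.eventuallyEq_of_mem (hs.mem_nhds hx) fun y hy => by linarith [heq y hy]
  rw [lap_pd_comm hu hs hx, e.pd_eq, pd_neg, pd_comp i hf
    (hu.differentiableAt_of_isOpen hs (by norm_num) hx), neg_neg]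

lemma neg_lap_pd_pd (hu : ContDiffOn ℝ 4 u s) (hs : IsOpen s)
    (hf : ∀ y ∈ s, DifferentiableAt ℝ f (u y)) (hf' : DifferentiableAt ℝ (deriv f) (u x))
    (heq : ∀ y ∈ s, -lap u y = f (u y)) (hx : x ∈ s) (i j : Fin m) :
    -lap (pd i (pd j u)) x =
      deriv f (u x) * pd i (pd j u) x + deriv (deriv f) (u x) * pd i u x * pd j u x := by
  have hu3 : ContDiffOn ℝ 3 (pd j u) s := hu.pd hs (by norm_num) j
  have hdu := hu.differentiableAt_of_isOpen hs (by norm_num) hx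
  have e : lap (pd j u) =ᶠ[𝓝 x] fun y => -(deriv f (u y) * pd j u y) :=
    Filter.eventuallyEq_of_mem (hs.mem_nhds hx) fun y hy => by
      linarith [neg_lap_pd (hu.of_le (by norm_num)) hs (hf y hy) heq hy j]
  rw [lap_pd_comm hu3 hs hx, e.pd_eq, pd_neg, neg_neg,
    pd_mul (g := fun y => deriv f (u y)) i (hf'.comp x hdu)
      (hu3.differentiableAt_of_isOpen hs (by norm_num) hx),
    pd_comp i hf' hdu]
  ring

end Semilinear

lemma neg_lap_div_ge {w z : EuclideanSpace ℝ (Fin m) → ℝ} {c q : ℝ}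
    (hw : ContDiffOn ℝ 2 w s) (hz : ContDiffOn ℝ 2 z s) (hs : IsOpen s)
    (hz_pos : ∀ y ∈ s, 0 < z y) (hx : x ∈ s) (hq : 0 ≤ q)
    (hlw : -lap w x = c * w x + q) (hlz : -lap z x = c * z x - 2 * w x) :
    -lap (fun y => w y / z y) x ≥
      2 * (w x / z x) ^ 2 +
        2 * inner ℝ ((z x)⁻¹ • gradient z x) (gradient (fun y => w y / z y) x) := by
  set ξ := fun y => w y / z y
  have hzx := hz_pos x hx
  have hwx : w x = ξ x * z x := (div_mul_cancel₀ (w x) hzx.ne').symm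
  have hwξ : lap w x = lap (fun y => ξ y * z y) x :=
    Filter.EventuallyEq.lap_eq <| Filter.eventuallyEq_of_mem (hs.mem_nhds hx) fun y hy =>
      (div_mul_cancel₀ (w y) (hz_pos y hy).ne').symm
  have hξ : ContDiffOn ℝ 2 ξ s := hw.div hz fun y hy => (hz_pos y hy).ne'
  rw [lap_mul hξ hz hs hx] at hwξ
  have hmain : -lap ξ x * z x =
      q + 2 * inner ℝ (gradient ξ x) (gradient z x) + 2 * ξ x ^ 2 * z x := by
    linear_combination hwξ + hlw - ξ x * hlz + (c + 2 * ξ x) * hwx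
  have hrest : -lap ξ x - (2 * ξ x ^ 2 + 2 * inner ℝ ((z x)⁻¹ • gradient z x) (gradient ξ x)) =
      q / z x := by
    rw [real_inner_smul_left, real_inner_comm]
    field_simp
    linear_combination hmain
  linarith [div_nonneg hq hzx.le]

/-- In the half-space setting with `v = uₓₙ > 0`, `w = uₓₙₓₙ`, `z = (1+xₙ)v`, `ξ = w/z`,
if `f'' ≥ 0` on `(0,∞)` then `-Δξ ≥ 2ξ² + 2(∇z/z)·∇ξ` on `Ω`. -/
theorem stmt6 {n : ℕ} {Ω : Set (EuclideanSpace ℝ (Fin (n + 1)))} (hΩ : IsOpen Ω)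
    (hΩhalf : Ω ⊆ {x | 0 < x (Fin.last n)})
    (f : ℝ → ℝ) (hf : ContDiffOn ℝ 2 f (Set.Ioi 0))
    (hconv : ∀ s > (0 : ℝ), 0 ≤ deriv (deriv f) s)
    (u : EuclideanSpace ℝ (Fin (n + 1)) → ℝ) (hu : ContDiffOn ℝ 4 u Ω)
    (hupos : ∀ x ∈ Ω, 0 < u x)
    (heq : ∀ x ∈ Ω, -lap u x = f (u x))
    (hv : ∀ x ∈ Ω, 0 < pd (Fin.last n) u x) :
    ∀ x ∈ Ω,
      -lap (fun y =>
          pd (Fin.last n) (pd (Fin.last n) u) y /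
            ((1 + y (Fin.last n)) * pd (Fin.last n) u y)) x ≥
        2 * (pd (Fin.last n) (pd (Fin.last n) u) x /
              ((1 + x (Fin.last n)) * pd (Fin.last n) u x)) ^ 2
          + 2 * (inner ℝ
              (((1 + x (Fin.last n)) * pd (Fin.last n) u x)⁻¹ •
                gradient (fun y => (1 + y (Fin.last n)) * pd (Fin.last n) u y) x)
              (gradient (fun y =>
                pd (Fin.last n) (pd (Fin.last n) u) y /
                  ((1 + y (Fin.last n)) * pd (Fin.last n) u y)) x) : ℝ) := by
  intro x hx
  set ν := Fin.last n
  have hfu : ∀ y ∈ Ω, DifferentiableAt ℝ f (u y) := fun y hy =>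
    hf.differentiableAt_of_isOpen isOpen_Ioi two_ne_zero (hupos y hy)
  have hf'u : DifferentiableAt ℝ (deriv f) (u x) :=
    (hf.deriv_of_isOpen isOpen_Ioi (m := 1) (by norm_num)).differentiableAt_of_isOpen
      isOpen_Ioi one_ne_zero (hupos x hx)
  have hv3 : ContDiffOn ℝ 3 (pd ν u) Ω := hu.pd hΩ (by norm_num) ν
  have hz : ContDiffOn ℝ 2 (fun y => (1 + y ν) * pd ν u y) Ω :=
    (contDiff_one_add_coord ν).contDiffOn.mul (hv3.of_le (by norm_num))
  have hz_pos : ∀ y ∈ Ω, 0 < (1 + y ν) * pd ν u y := fun y hy =>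
    mul_pos (by linarith [show 0 < y ν from hΩhalf hy]) (hv y hy)
  have hlz : -lap (fun y => (1 + y ν) * pd ν u y) x =
      deriv f (u x) * ((1 + x ν) * pd ν u x) - 2 * pd ν (pd ν u) x := by
    rw [lap_one_add_coord_mul (hv3.of_le (by norm_num)) hΩ hx]
    linear_combination (1 + x ν) * neg_lap_pd (hu.of_le (by norm_num)) hΩ (hfu x hx) heq hx ν
  exact neg_lap_div_ge (hv3.pd hΩ (by norm_num) ν) hz hΩ hz_pos hx
    (mul_nonneg (mul_nonneg (hconv _ (hupos x hx)) (hv x hx).le) (hv x hx).le)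
    (neg_lap_pd_pd hu hΩ hfu hf'u heq hx ν ν) hlz
end

section
/- Suppose n ≥ 3 and p ≥ (n+2)/(n-2), and let U : [0,∞) → (0,∞) be a radial positive classical solution profile of -Δu = u^p on ℝⁿ with U' < 0 on (0,∞). Define u_j(x) := j^{2/(p-1)} U(j|x|). Then sup_{B₁} u_j = U(0) j^{2/(p-1)}, and for every σ ∈ (0,1) and every j > 1/σ, sup_{B_σ} |∇u_j|/u_j ≥ c (sup_{B₁} u_j)^{(p-1)/2} where c = (|U'(1)|/U(1)) U(0)^{(1-p)/2} > 0. -/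
/-!
The rescaled profile `u_j = j^{2/(p-1)} U(j|x|)` is maximal at the origin, so
`(sup_{B₁} u_j)^{(p-1)/2} = U(0)^{(p-1)/2} j` and the constant `c` turns the left side into
`j |U'(1)| / U(1)`. At `x₀ = e / j` with `|e| = 1`, which lies in `B_σ` because `j > 1/σ`,
`u_j` sees `U` at radius `1`: its radial derivative there is `j^{2/(p-1)+1} U'(1)`, which bounds
`|∇u_j(x₀)|` from below, so `|∇u_j|/u_j (x₀) ≥ j |U'(1)| / U(1)`.
-/

open Metric MeasureTheory Set

open scoped InnerProductSpace Topology

lemma one_lt_of_add_two_div_sub_two_le {n p : ℝ} (hn : 2 < n) (hp : (n + 2) / (n - 2) ≤ p) : 1 < p := by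
  refine lt_of_lt_of_le ?_ hp
  rw [lt_div_iff₀ (by linarith)]
  linarith

lemma rpow_mul_rpow_scaling {a p t : ℝ} (ha : 0 < a) (ht : 0 ≤ t) (hp : p ≠ 1) :
    a ^ ((1 - p) / 2) * (a * t ^ (2 / (p - 1))) ^ ((p - 1) / 2) = t := by
  rw [Real.mul_rpow ha.le (by positivity), ← Real.rpow_mul ht, ← mul_assoc,
    ← Real.rpow_add ha, show (1 - p) / 2 + (p - 1) / 2 = 0 by ring,
    show 2 / (p - 1) * ((p - 1) / 2) = 1 by field_simp, Real.rpow_zero, Real.rpow_one, one_mul]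

section Radial

variable {E : Type*} [NormedAddCommGroup E] [NormedSpace ℝ E]

lemma continuousOn_Ici_of_continuous_radial [Nontrivial E] {U : ℝ → ℝ}
    (hU : Continuous fun x : E => U ‖x‖) : ContinuousOn U (Ici 0) := by
  obtain ⟨e, he⟩ := exists_norm_eq E zero_le_one
  have hline : Continuous fun r : ℝ => U ‖r • e‖ := hU.comp (continuous_id.smul continuous_const)
  refine hline.continuousOn.congr fun r hr => ?_
  simp [norm_smul, he, abs_of_nonneg (mem_Ici.mp hr)]

lemma le_apply_zero_of_deriv_neg {U : ℝ → ℝ} (hU : ContinuousOn U (Ici 0))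
    (hU' : ∀ r, 0 < r → deriv U r < 0) : ∀ r, 0 ≤ r → U r ≤ U 0 := fun r hr =>
  (strictAntiOn_of_deriv_neg (convex_Ici 0) hU
    (fun r hr => hU' r (by rwa [interior_Ici] at hr))).antitoneOn
    (mem_Ici.mpr le_rfl) (mem_Ici.mpr hr) hr

omit [NormedSpace ℝ E] in
lemma sSup_image_ball_rescaled {U : ℝ → ℝ} (hU : ∀ r, 0 ≤ r → U r ≤ U 0) {c s : ℝ}
    (hc : 0 ≤ c) (hs : 0 ≤ s) :
    sSup ((fun x : E => c * U (s * ‖x‖)) '' ball 0 1) = U 0 * c := by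
  refine IsGreatest.csSup_eq ⟨⟨0, mem_ball_self one_pos, by simp [mul_comm]⟩, ?_⟩
  rintro _ ⟨x, -, rfl⟩
  rw [mul_comm (U 0)]
  exact mul_le_mul_of_nonneg_left (hU _ (by positivity)) hc

lemma ContDiff.radial_rescale {k : WithTop ℕ∞} {U : ℝ → ℝ}
    (hU : ContDiff ℝ k fun x : E => U ‖x‖) (c : ℝ) {s : ℝ} (hs : 0 ≤ s) :
    ContDiff ℝ k fun x : E => c * U (s * ‖x‖) := by
  have h : ContDiff ℝ k fun x : E => c * U ‖s • x‖ :=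
    contDiff_const.mul (hU.comp (contDiff_const_smul s))
  simpa [norm_smul, abs_of_nonneg hs] using h

end Radial

section Gradient

variable {E : Type*} [NormedAddCommGroup E] [InnerProductSpace ℝ E] [CompleteSpace E]

lemma bddAbove_image_ball_norm_gradient_div [ProperSpace E] {f : E → ℝ} (hf : ContDiff ℝ 1 f)
    (hpos : ∀ x, 0 < f x) (x₀ : E) (r : ℝ) :
    BddAbove ((fun x => ‖gradient f x‖ / f x) '' ball x₀ r) := by
  have hgrad : Continuous (gradient f) :=
    (InnerProductSpace.toDual ℝ E).symm.continuous.comp (hf.continuous_fderiv one_ne_zero)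
  have hcont : Continuous fun x => ‖gradient f x‖ / f x :=
    hgrad.norm.div hf.continuous fun x => (hpos x).ne'
  exact ((isCompact_closedBall x₀ r).bddAbove_image hcont.continuousOn).mono
    (image_mono ball_subset_closedBall)

lemma abs_le_norm_gradient_radial {g : ℝ → ℝ} {g' t : ℝ} {e : E} (he : ‖e‖ = 1) (ht : 0 < t)
    (hf : DifferentiableAt ℝ (fun y : E => g ‖y‖) (t • e)) (hg : HasDerivAt g g' t) :
    |g'| ≤ ‖gradient (fun y : E => g ‖y‖) (t • e)‖ := by
  set f := fun y : E => g ‖y‖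
  have hline : HasDerivAt (fun r : ℝ => f (r • e)) (fderiv ℝ f (t • e) e) t := by
    have hdir := (hasDerivAt_id t).smul_const e
    rw [one_smul] at hdir
    exact hf.hasFDerivAt.comp_hasDerivAt t hdir
  have hradial : (fun r : ℝ => f (r • e)) =ᶠ[𝓝 t] g := by
    filter_upwards [Ioi_mem_nhds ht] with r hr
    simp [f, norm_smul, he, abs_of_pos (mem_Ioi.mp hr)]
  have hg' : g' = ⟪gradient f (t • e), e⟫_ℝ := by
    rw [inner_gradient_left]
    exact hg.unique (hline.congr_of_eventuallyEq hradial.symm)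
  calc |g'| ≤ ‖gradient f (t • e)‖ * ‖e‖ := hg' ▸ abs_real_inner_le_norm _ _
    _ = ‖gradient f (t • e)‖ := by rw [he, mul_one]

lemma le_norm_gradient_div_rescaled {U : ℝ → ℝ} {c s : ℝ} {e : E} (hc : 0 < c) (hs : 0 < s)
    (he : ‖e‖ = 1) (hU : DifferentiableAt ℝ U 1) (hU1 : 0 < U 1)
    (hd : DifferentiableAt ℝ (fun x : E => c * U (s * ‖x‖)) (s⁻¹ • e)) :
    |deriv U 1| / U 1 * s ≤
      ‖gradient (fun x : E => c * U (s * ‖x‖)) (s⁻¹ • e)‖ / (c * U (s * ‖s⁻¹ • e‖)) := by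
  have hU' : HasDerivAt U (deriv U 1) (s * s⁻¹) := by
    rw [mul_inv_cancel₀ hs.ne']
    exact hU.hasDerivAt
  have hgrad := abs_le_norm_gradient_radial he (inv_pos.mpr hs) hd
    ((hU'.comp _ ((hasDerivAt_id _).const_mul s)).const_mul c)
  have hnorm : s * ‖s⁻¹ • e‖ = 1 := by
    rw [norm_smul, he, mul_one, norm_inv, Real.norm_of_nonneg hs.le, mul_inv_cancel₀ hs.ne']
  rw [hnorm, le_div_iff₀ (mul_pos hc hU1)]
  calc |deriv U 1| / U 1 * s * (c * U 1) = |c * (deriv U 1 * (s * 1))| := by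
        rw [mul_one, abs_mul, abs_mul, abs_of_pos hc, abs_of_pos hs]
        field_simp
    _ ≤ _ := hgrad

end Gradient

theorem stmt9_general {n : ℕ} (hn : 3 ≤ n) (p : ℝ) (hp : ((n : ℝ) + 2) / ((n : ℝ) - 2) ≤ p)
    (U : ℝ → ℝ)
    (hUpos : ∀ r : ℝ, 0 ≤ r → 0 < U r)
    (hUdec : ∀ r : ℝ, 0 < r → deriv U r < 0)
    (hsmooth : ContDiff ℝ 2 (fun x : EuclideanSpace ℝ (Fin n) => U ‖x‖))
    (j : ℕ) (σ : ℝ) (hσ : σ ∈ Set.Ioo (0 : ℝ) 1) (hj : 1 / σ < (j : ℝ)) :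
    sSup ((fun x : EuclideanSpace ℝ (Fin n) => (j : ℝ) ^ (2 / (p - 1)) * U ((j : ℝ) * ‖x‖)) ''
        Metric.ball 0 1) = U 0 * (j : ℝ) ^ (2 / (p - 1)) ∧
    (|deriv U 1| / U 1) * (U 0) ^ ((1 - p) / 2) *
        (sSup ((fun x : EuclideanSpace ℝ (Fin n) =>
          (j : ℝ) ^ (2 / (p - 1)) * U ((j : ℝ) * ‖x‖)) '' Metric.ball 0 1)) ^ ((p - 1) / 2)
      ≤ sSup ((fun x : EuclideanSpace ℝ (Fin n) =>
          ‖gradient (fun y => (j : ℝ) ^ (2 / (p - 1)) * U ((j : ℝ) * ‖y‖)) x‖ /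
            ((j : ℝ) ^ (2 / (p - 1)) * U ((j : ℝ) * ‖x‖))) '' Metric.ball 0 σ) := by
  have : Nonempty (Fin n) := ⟨⟨0, by omega⟩⟩
  have hp1 : 1 < p := one_lt_of_add_two_div_sub_two_le (by exact_mod_cast hn) hp
  have hj0 : 0 < (j : ℝ) := (one_div_pos.mpr hσ.1).trans hj
  set c := (j : ℝ) ^ (2 / (p - 1))
  have hc : 0 < c := by positivity
  have hUmax := le_apply_zero_of_deriv_neg
    (continuousOn_Ici_of_continuous_radial hsmooth.continuous) hUdec
  have hsup := sSup_image_ball_rescaled (E := EuclideanSpace ℝ (Fin n)) hUmax hc.le hj0.le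
  refine ⟨hsup, ?_⟩
  rw [hsup, mul_assoc, rpow_mul_rpow_scaling (hUpos 0 le_rfl) hj0.le hp1.ne']
  obtain ⟨e, he⟩ := exists_norm_eq (EuclideanSpace ℝ (Fin n)) zero_le_one
  have hx₀ : (j : ℝ)⁻¹ • e ∈ ball 0 σ := by
    rw [mem_ball_zero_iff, norm_smul, he, mul_one, norm_inv, Real.norm_natCast]
    exact (inv_lt_comm₀ hσ.1 hj0).mp (one_div σ ▸ hj)
  have hG := hsmooth.radial_rescale c hj0.le
  refine le_csSup_of_le (bddAbove_image_ball_norm_gradient_div (hG.of_le one_le_two)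
    (fun x => mul_pos hc (hUpos _ (by positivity))) 0 σ) ⟨_, hx₀, rfl⟩ ?_
  exact le_norm_gradient_div_rescaled hc hj0 he
    (differentiableAt_of_deriv_ne_zero (hUdec 1 one_pos).ne) (hUpos 1 zero_le_one)
    ((hG.differentiable two_ne_zero).differentiableAt)

/-- Optimality of the logarithmic gradient estimate: for a radial decreasing positive
solution profile `U` of the Lane-Emden equation with `n ≥ 3`, `p ≥ (n+2)/(n-2)`, the
rescalings `u_j(x) = j^{2/(p-1)} U(j|x|)` satisfy `sup_{B₁} u_j = U(0) j^{2/(p-1)}` and,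
for `σ ∈ (0,1)` and `j > 1/σ`,
`sup_{B_σ} |∇u_j|/u_j ≥ c (sup_{B₁} u_j)^{(p-1)/2}` with
`c = (|U'(1)|/U(1)) U(0)^{(1-p)/2}`. -/
theorem stmt9 {n : ℕ} (hn : 3 ≤ n) (p : ℝ) (hp : ((n : ℝ) + 2) / ((n : ℝ) - 2) ≤ p)
    (U : ℝ → ℝ)
    (hUpos : ∀ r : ℝ, 0 ≤ r → 0 < U r)
    (hUdec : ∀ r : ℝ, 0 < r → deriv U r < 0)
    (hsmooth : ContDiff ℝ 2 (fun x : EuclideanSpace ℝ (Fin n) => U ‖x‖))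
    (heq : ∀ x : EuclideanSpace ℝ (Fin n),
      -lap (fun y => U ‖y‖) x = (U ‖x‖) ^ p)
    (j : ℕ) (σ : ℝ) (hσ : σ ∈ Set.Ioo (0 : ℝ) 1) (hj : 1 / σ < (j : ℝ)) :
    sSup ((fun x : EuclideanSpace ℝ (Fin n) => (j : ℝ) ^ (2 / (p - 1)) * U ((j : ℝ) * ‖x‖)) ''
        Metric.ball 0 1) = U 0 * (j : ℝ) ^ (2 / (p - 1)) ∧
    (|deriv U 1| / U 1) * (U 0) ^ ((1 - p) / 2) *
        (sSup ((fun x : EuclideanSpace ℝ (Fin n) =>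
          (j : ℝ) ^ (2 / (p - 1)) * U ((j : ℝ) * ‖x‖)) '' Metric.ball 0 1)) ^ ((p - 1) / 2)
      ≤ sSup ((fun x : EuclideanSpace ℝ (Fin n) =>
          ‖gradient (fun y => (j : ℝ) ^ (2 / (p - 1)) * U ((j : ℝ) * ‖y‖)) x‖ /
            ((j : ℝ) ^ (2 / (p - 1)) * U ((j : ℝ) * ‖x‖))) '' Metric.ball 0 σ) :=
  stmt9_general hn p hp U hUpos hUdec hsmooth j σ hσ hj
end

section
/- Let n ≥ 1, c₀, c₁ > 0, and let λ₁(R) denote the first Dirichlet eigenvalue of -Δ on the ball B_R ⊆ ℝⁿ. Choose R₀ > 0 with λ₁(2R₀) = c₀/2. Then there is a constant C = C(c₀, c₁, n) such that every positive C² solution u of -Δu = f(u) on the closed ball B_{2R₀}(x₀), where f satisfies f(s) ≥ c₀ s - c₁ for all s > 0, satisfies ∫_{B_{R₀}(x₀)} u(x) dx ≤ C. -/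
open Metric MeasureTheory Set

/-!
Translate so that `u` lives on `B_{2R₀}(0)`, let `M = max φ` and test the equation against
`ψ = 3Mφ² - φ³ ≥ 0`. Since `ψ` vanishes to second order on the sphere, the field `u∇ψ - ψ∇u`
vanishes there, so `∫ (uΔψ - ψΔu) = 0`; this divergence theorem on the ball is proved one
coordinate line at a time with the fundamental theorem of calculus. Expanding
`Δψ = (6M - 6φ)|∇φ|² + (6Mφ - 3φ²)Δφ` with `Δφ = -(c₀/2)φ` and `-Δu = f(u) ≥ c₀u - c₁` gives
`uΔψ - ψΔu ≥ (c₀/2)uφ³ - c₁ψ`, hence `∫ uφ³ ≤ (2c₁/c₀) ∫ ψ ≤ 6c₁M³|B_{2R₀}|/c₀`. Finally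
`φ ≥ δ > 0` on `B_{R₀}`.
-/

open Filter Topology

lemma ContinuousOn.integrableOn_ball {E : Type*} [NormedAddCommGroup E] [ProperSpace E]
    [MeasurableSpace E] [OpensMeasurableSpace E] {μ : Measure E} [IsFiniteMeasureOnCompacts μ]
    {g : E → ℝ} {c : E} {r : ℝ} (hg : ContinuousOn g (closedBall c r)) :
    IntegrableOn g (ball c r) μ :=
  (hg.integrableOn_compact (isCompact_closedBall c r)).mono_set ball_subset_closedBall

lemma setIntegral_ball_comp_add_right {E : Type*} [NormedAddCommGroup E] [MeasurableSpace E]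
    [BorelSpace E] {μ : Measure E} [μ.IsAddRightInvariant] (g : E → ℝ) (a : E) (r : ℝ) :
    ∫ x in ball 0 r, g (x + a) ∂μ = ∫ x in ball a r, g x ∂μ := by
  rw [← (measurePreserving_add_right μ a).setIntegral_preimage_emb
    (measurableEmbedding_addRight a) g (ball a r), Metric.preimage_add_right_ball, sub_self]

lemma integral_Ioo_eq_zero_of_hasDerivAt {F f : ℝ → ℝ} {a b : ℝ} (hab : a ≤ b)
    (hF : ContinuousOn F (Icc a b)) (ha : F a = 0) (hb : F b = 0) (hf : ContinuousOn f (Icc a b))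
    (hderiv : ∀ t ∈ Ioo a b, HasDerivAt F (f t) t) :
    ∫ t in Ioo a b, f t = 0 := by
  rw [← integral_Ioc_eq_integral_Ioo, ← intervalIntegral.integral_of_le hab,
    intervalIntegral.integral_eq_sub_of_hasDerivAt_of_le hab hF hderiv
      (hf.intervalIntegrable_of_Icc hab), ha, hb, sub_zero]

section Slices

variable {m : ℕ}

noncomputable def sliceEquiv (i : Fin (m + 1)) :
    ℝ × (Fin m → ℝ) ≃ᵐ EuclideanSpace ℝ (Fin (m + 1)) :=
  (MeasurableEquiv.piFinSuccAbove (fun _ ↦ ℝ) i).symm.trans (MeasurableEquiv.toLp 2 _)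

lemma measurePreserving_sliceEquiv (i : Fin (m + 1)) :
    MeasurePreserving (sliceEquiv i) (volume.prod volume) volume :=
  (EuclideanSpace.volume_preserving_symm_measurableEquiv_toLp _).symm.comp
    ((volume_preserving_piFinSuccAbove (fun _ ↦ ℝ) i).symm _)

@[simp]
lemma sliceEquiv_apply_self (i : Fin (m + 1)) (t : ℝ) (y : Fin m → ℝ) :
    sliceEquiv i (t, y) i = t := by
  simp [sliceEquiv, MeasurableEquiv.piFinSuccAbove_symm_apply, Fin.insertNthEquiv]

@[simp]
lemma sliceEquiv_apply_succAbove (i : Fin (m + 1)) (t : ℝ) (y : Fin m → ℝ) (j : Fin m) :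
    sliceEquiv i (t, y) (i.succAbove j) = y j := by
  simp [sliceEquiv, MeasurableEquiv.piFinSuccAbove_symm_apply, Fin.insertNthEquiv]

lemma sliceEquiv_eq_add_smul_single (i : Fin (m + 1)) (s t : ℝ) (y : Fin m → ℝ) :
    sliceEquiv i (s, y) = sliceEquiv i (t, y) + (s - t) • EuclideanSpace.single i 1 := by
  ext k
  rcases Fin.eq_self_or_eq_succAbove i k with rfl | ⟨j, rfl⟩
  · simp
  · simp [Fin.succAbove_ne]

lemma continuous_sliceEquiv_left (i : Fin (m + 1)) (y : Fin m → ℝ) :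
    Continuous fun t ↦ sliceEquiv i (t, y) := by
  have h : (fun t ↦ sliceEquiv i (t, y)) =
      fun t ↦ sliceEquiv i (0, y) + (t - 0) • EuclideanSpace.single i 1 :=
    funext fun t ↦ sliceEquiv_eq_add_smul_single i t 0 y
  rw [h]
  fun_prop

lemma dist_sliceEquiv_sq (i : Fin (m + 1)) (c : EuclideanSpace ℝ (Fin (m + 1))) (t : ℝ)
    (y : Fin m → ℝ) :
    dist (sliceEquiv i (t, y)) c ^ 2 = (t - c i) ^ 2 + ∑ j, (y j - c (i.succAbove j)) ^ 2 := by
  rw [EuclideanSpace.dist_eq, Real.sq_sqrt (by positivity), Fin.sum_univ_succAbove _ i]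
  simp [Real.dist_eq, sq_abs]

lemma HasLineDerivAt.hasDerivAt_sliceEquiv {G : EuclideanSpace ℝ (Fin (m + 1)) → ℝ} {g' : ℝ}
    {i : Fin (m + 1)} {t : ℝ} {y : Fin m → ℝ}
    (hG : HasLineDerivAt ℝ G g' (sliceEquiv i (t, y)) (EuclideanSpace.single i 1)) :
    HasDerivAt (fun s ↦ G (sliceEquiv i (s, y))) g' t := by
  have hG' : HasDerivAt (fun s ↦ G (sliceEquiv i (t, y) + s • EuclideanSpace.single i 1)) g'
      (t - t) := by
    rw [sub_self]
    exact hG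
  have hline : (fun s ↦ G (sliceEquiv i (s, y))) =
      fun s ↦ G (sliceEquiv i (t, y) + (s - t) • EuclideanSpace.single i 1) :=
    funext fun s ↦ congrArg G (sliceEquiv_eq_add_smul_single i s t y)
  rw [hline]
  exact hG'.comp_sub_const t t

lemma integral_indicator_ball_sliceEquiv_eq_zero {c : EuclideanSpace ℝ (Fin (m + 1))} {r : ℝ}
    {G g : EuclideanSpace ℝ (Fin (m + 1)) → ℝ} {i : Fin (m + 1)} (hr : 0 < r)
    (hG : ContinuousOn G (closedBall c r)) (hG0 : ∀ x ∈ sphere c r, G x = 0)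
    (hg : ContinuousOn g (closedBall c r))
    (hder : ∀ x ∈ ball c r, HasLineDerivAt ℝ G (g x) x (EuclideanSpace.single i 1))
    (y : Fin m → ℝ) :
    ∫ t, (ball c r).indicator g (sliceEquiv i (t, y)) = 0 := by
  set γ : ℝ → EuclideanSpace ℝ (Fin (m + 1)) := fun t ↦ sliceEquiv i (t, y)
  set d := ∑ j, (y j - c (i.succAbove j)) ^ 2
  have hdist (t : ℝ) : dist (γ t) c ^ 2 = (t - c i) ^ 2 + d := dist_sliceEquiv_sq i c t y
  rcases le_or_gt (r ^ 2) d with hrd | hdr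
  · have hout (t : ℝ) : γ t ∉ ball c r := by
      rw [mem_ball, ← sq_lt_sq₀ dist_nonneg hr.le, hdist]
      nlinarith [sq_nonneg (t - c i)]
    simp [γ, indicator_of_notMem (hout _)]
  set w := √(r ^ 2 - d)
  have hw : 0 < w := Real.sqrt_pos.2 (by linarith)
  set a := c i - w
  set b := c i + w
  have hab : a < b := by linarith
  have hdist' (t : ℝ) : dist (γ t) c ^ 2 = (t - a) * (t - b) + r ^ 2 := by
    have hw2 : w ^ 2 = r ^ 2 - d := Real.sq_sqrt (sub_nonneg.2 hdr.le)
    rw [hdist]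
    linear_combination hw2
  have hball (t : ℝ) : γ t ∈ ball c r ↔ t ∈ Ioo a b := by
    rw [mem_ball, ← sq_lt_sq₀ dist_nonneg hr.le, hdist', add_lt_iff_neg_right, mul_neg_iff]
    constructor
    · rintro (h | h) <;> constructor <;> linarith [h.1, h.2]
    · exact fun h ↦ Or.inl ⟨by linarith [h.1], by linarith [h.2]⟩
  have hclosedBall (t : ℝ) (ht : t ∈ Icc a b) : γ t ∈ closedBall c r := by
    rw [mem_closedBall, ← sq_le_sq₀ dist_nonneg hr.le, hdist']
    nlinarith [ht.1, ht.2]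
  have hsphere (t : ℝ) (ht : (t - a) * (t - b) = 0) : γ t ∈ sphere c r := by
    rw [mem_sphere, ← sq_eq_sq₀ dist_nonneg hr.le, hdist', ht, zero_add]
  have hγ : Continuous γ := continuous_sliceEquiv_left i y
  have hγ_eq : (fun t ↦ (ball c r).indicator g (γ t)) = (Ioo a b).indicator (g ∘ γ) := by
    ext t
    by_cases ht : t ∈ Ioo a b
    · rw [indicator_of_mem ((hball t).2 ht), indicator_of_mem ht, Function.comp_apply]
    · rw [indicator_of_notMem (mt (hball t).1 ht), indicator_of_notMem ht]
  rw [hγ_eq, integral_indicator measurableSet_Ioo]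
  exact integral_Ioo_eq_zero_of_hasDerivAt hab.le (hG.comp hγ.continuousOn hclosedBall)
    (hG0 _ (hsphere a (by ring))) (hG0 _ (hsphere b (by ring)))
    (hg.comp hγ.continuousOn hclosedBall)
    fun t ht ↦ (hder _ ((hball t).2 ht)).hasDerivAt_sliceEquiv

end Slices

theorem integral_ball_eq_zero_of_hasLineDerivAt {n : ℕ} {c : EuclideanSpace ℝ (Fin n)} {r : ℝ}
    {G g : EuclideanSpace ℝ (Fin n) → ℝ} (i : Fin n) (hr : 0 < r)
    (hG : ContinuousOn G (closedBall c r)) (hG0 : ∀ x ∈ sphere c r, G x = 0)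
    (hg : ContinuousOn g (closedBall c r))
    (hder : ∀ x ∈ ball c r, HasLineDerivAt ℝ G (g x) x (EuclideanSpace.single i 1)) :
    ∫ x in ball c r, g x = 0 := by
  obtain ⟨m, rfl⟩ := Nat.exists_eq_add_one_of_ne_zero i.pos.ne'
  have hint : Integrable ((ball c r).indicator g) :=
    (integrable_indicator_iff measurableSet_ball).2 hg.integrableOn_ball
  have hmp := measurePreserving_sliceEquiv i
  have hemb := (sliceEquiv i).measurableEmbedding
  calc ∫ x in ball c r, g x = ∫ x, (ball c r).indicator g x :=
        (integral_indicator measurableSet_ball).symm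
    _ = ∫ z, (ball c r).indicator g (sliceEquiv i z) ∂(volume.prod volume) :=
        (hmp.integral_comp hemb _).symm
    _ = ∫ y, ∫ t, (ball c r).indicator g (sliceEquiv i (t, y)) :=
        integral_prod_symm _ ((hmp.integrable_comp_emb hemb).2 hint)
    _ = 0 := by simp [integral_indicator_ball_sliceEquiv_eq_zero hr hG hG0 hg hder]

lemma hasLineDerivAt_greenFlux {E : Type*} [NormedAddCommGroup E] [NormedSpace ℝ E]
    {u σ p q : E → ℝ} {h h' h'' : ℝ → ℝ} {x e : E} {p' q' : ℝ}
    (hu : HasLineDerivAt ℝ u (q x) x e) (hσ : HasLineDerivAt ℝ σ (p x) x e)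
    (hp : HasLineDerivAt ℝ p p' x e) (hq : HasLineDerivAt ℝ q q' x e)
    (hh : HasDerivAt h (h' (σ x)) (σ x)) (hh' : HasDerivAt h' (h'' (σ x)) (σ x)) :
    HasLineDerivAt ℝ (fun y ↦ u y * (h' (σ y) * p y) - h (σ y) * q y)
      (u x * h'' (σ x) * p x ^ 2 + u x * h' (σ x) * p' - h (σ x) * q') x e := by
  have hx : x + (0 : ℝ) • e = x := by simp
  unfold HasLineDerivAt at *
  rw [← hx] at hh hh'
  have := (hu.mul ((hh'.comp 0 hσ).mul hp)).sub ((hh.comp 0 hσ).mul hq)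
  convert this using 1
  · ext t
    simp only [Pi.mul_apply, Pi.sub_apply, Function.comp_apply]
  · simp only [Pi.mul_apply, Function.comp_apply, hx]
    ring

section PartialDerivWithin

variable {n : ℕ} {s : Set (EuclideanSpace ℝ (Fin n))} {x : EuclideanSpace ℝ (Fin n)}
  {v : EuclideanSpace ℝ (Fin n) → ℝ}

/-- Unlike `pd`, this sees only the values of `v` on `s`, so it is continuous up to the boundary
when `v` is `C¹` on `s`. -/
noncomputable def pdWithin (s : Set (EuclideanSpace ℝ (Fin n))) (i : Fin n)
    (v : EuclideanSpace ℝ (Fin n) → ℝ) : EuclideanSpace ℝ (Fin n) → ℝ :=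
  fun x ↦ fderivWithin ℝ v s x (EuclideanSpace.single i 1)

lemma pdWithin_of_mem_nhds (hx : s ∈ 𝓝 x) (i : Fin n) : pdWithin s i v x = pd i v x := by
  rw [pdWithin, pd, fderivWithin_of_mem_nhds hx]

lemma pdWithin_pdWithin_of_mem_interior (hx : x ∈ interior s) (i : Fin n) :
    pdWithin s i (pdWithin s i v) x = pd i (pd i v) x := by
  have heq : pdWithin s i v =ᶠ[𝓝 x] pd i v := by
    filter_upwards [isOpen_interior.mem_nhds hx] with y hy
    exact pdWithin_of_mem_nhds (mem_interior_iff_mem_nhds.1 hy) i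
  rw [pdWithin, pd, fderivWithin_of_mem_nhds (mem_interior_iff_mem_nhds.1 hx), heq.fderiv_eq]

lemma lap_eq_sum_pdWithin (hx : x ∈ interior s) :
    lap v x = ∑ i, pdWithin s i (pdWithin s i v) x := by
  simp only [lap, pdWithin_pdWithin_of_mem_interior hx]

lemma ContDiffOn.hasLineDerivAt_pdWithin (hv : ContDiffOn ℝ 1 v s) (hx : x ∈ interior s)
    (i : Fin n) : HasLineDerivAt ℝ v (pdWithin s i v x) x (EuclideanSpace.single i 1) := by
  have hs : s ∈ 𝓝 x := mem_interior_iff_mem_nhds.1 hx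
  rw [pdWithin_of_mem_nhds hs]
  exact ((hv.contDiffAt hs).differentiableAt one_ne_zero).hasFDerivAt.hasLineDerivAt _

lemma ContDiffOn.pdWithin {k : ℕ} (hv : ContDiffOn ℝ (k + 1) v s) (hs : UniqueDiffOn ℝ s)
    (i : Fin n) : ContDiffOn ℝ k (pdWithin s i v) s :=
  (hv.fderivWithin hs le_rfl).clm_apply contDiffOn_const

end PartialDerivWithin

lemma lap_comp_add_right {n : ℕ} (v : EuclideanSpace ℝ (Fin n) → ℝ)
    (a x : EuclideanSpace ℝ (Fin n)) : lap (fun y ↦ v (y + a)) x = lap v (x + a) := by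
  have hpd (w : EuclideanSpace ℝ (Fin n) → ℝ) (i : Fin n) :
      pd i (fun y ↦ w (y + a)) = fun y ↦ pd i w (y + a) := by
    ext y
    rw [pd, pd, fderiv_comp_add_right]
  simp only [lap, hpd]

lemma uniqueDiffOn_closedBall {E : Type*} [NormedAddCommGroup E] [NormedSpace ℝ E] (c : E)
    {r : ℝ} (hr : 0 < r) : UniqueDiffOn ℝ (closedBall c r) :=
  uniqueDiffOn_convex (convex_closedBall c r) (by simp [interior_closedBall c hr.ne', hr])

section GreenIdentity

variable {n : ℕ} {s : Set (EuclideanSpace ℝ (Fin n))} {c : EuclideanSpace ℝ (Fin n)} {r : ℝ}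
  {u σ : EuclideanSpace ℝ (Fin n) → ℝ} {h h' h'' : ℝ → ℝ}

/-- `u Δψ - ψ Δu` for `ψ = h ∘ σ`, with `Δψ` expanded by the chain rule; it is the divergence of
the field `u ∇ψ - ψ ∇u`. -/
noncomputable def greenIntegrand (h h' h'' : ℝ → ℝ) (u σ : EuclideanSpace ℝ (Fin n) → ℝ)
    (x : EuclideanSpace ℝ (Fin n)) : ℝ :=
  u x * h'' (σ x) * ∑ i, pd i σ x ^ 2 + u x * h' (σ x) * lap σ x - h (σ x) * lap u x

noncomputable def greenTermWithin (s : Set (EuclideanSpace ℝ (Fin n))) (h h' h'' : ℝ → ℝ)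
    (u σ : EuclideanSpace ℝ (Fin n) → ℝ) (i : Fin n) (x : EuclideanSpace ℝ (Fin n)) : ℝ :=
  u x * h'' (σ x) * pdWithin s i σ x ^ 2 + u x * h' (σ x) * pdWithin s i (pdWithin s i σ) x
    - h (σ x) * pdWithin s i (pdWithin s i u) x

lemma greenIntegrand_eq_sum_greenTermWithin {x : EuclideanSpace ℝ (Fin n)}
    (hx : x ∈ interior s) :
    greenIntegrand h h' h'' u σ x = ∑ i, greenTermWithin s h h' h'' u σ i x := by
  rw [greenIntegrand, lap_eq_sum_pdWithin hx, lap_eq_sum_pdWithin hx, Finset.mul_sum,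
    Finset.mul_sum, Finset.mul_sum, ← Finset.sum_add_distrib, ← Finset.sum_sub_distrib]
  simp only [greenTermWithin, pdWithin_of_mem_nhds (mem_interior_iff_mem_nhds.1 hx)]

lemma continuousOn_greenTermWithin (hs : UniqueDiffOn ℝ s) (hu : ContDiffOn ℝ 2 u s)
    (hσ : ContDiffOn ℝ 2 σ s) (hh : ∀ t, HasDerivAt h (h' t) t)
    (hh' : ∀ t, HasDerivAt h' (h'' t) t) (hh'' : Continuous h'') (i : Fin n) :
    ContinuousOn (greenTermWithin s h h' h'' u σ i) s := by
  have := (hσ.pdWithin (k := 1) hs i).continuousOn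
  have := ((hσ.pdWithin (k := 1) hs i).pdWithin (k := 0) hs i).continuousOn
  have := ((hu.pdWithin (k := 1) hs i).pdWithin (k := 0) hs i).continuousOn
  have := hu.continuousOn
  have := hσ.continuousOn
  have : Continuous h := Differentiable.continuous fun t ↦ (hh t).differentiableAt
  have : Continuous h' := Differentiable.continuous fun t ↦ (hh' t).differentiableAt
  unfold greenTermWithin
  fun_prop

lemma integral_ball_greenTermWithin_eq_zero (hr : 0 < r)
    (hu : ContDiffOn ℝ 2 u (closedBall c r)) (hσ : ContDiffOn ℝ 2 σ (closedBall c r))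
    (hσ_sphere : ∀ x ∈ sphere c r, σ x = 0) (hh : ∀ t, HasDerivAt h (h' t) t)
    (hh' : ∀ t, HasDerivAt h' (h'' t) t) (hh'' : Continuous h'') (h0 : h 0 = 0)
    (h'0 : h' 0 = 0) (i : Fin n) :
    ∫ x in ball c r, greenTermWithin (closedBall c r) h h' h'' u σ i x = 0 := by
  set D := closedBall c r
  have hDint : interior D = ball c r := interior_closedBall c hr.ne'
  have hD : UniqueDiffOn ℝ D := uniqueDiffOn_closedBall c hr
  have hP : ContDiffOn ℝ 1 (pdWithin D i σ) D := hσ.pdWithin hD i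
  have hQ : ContDiffOn ℝ 1 (pdWithin D i u) D := hu.pdWithin hD i
  have hh_cont : Continuous h := Differentiable.continuous fun t ↦ (hh t).differentiableAt
  have hh'_cont : Continuous h' := Differentiable.continuous fun t ↦ (hh' t).differentiableAt
  have hu_cont := hu.continuousOn
  have hσ_cont := hσ.continuousOn
  have hP_cont := hP.continuousOn
  have hQ_cont := hQ.continuousOn
  refine integral_ball_eq_zero_of_hasLineDerivAt
    (G := fun x ↦ u x * (h' (σ x) * pdWithin D i σ x) - h (σ x) * pdWithin D i u x) i hr
    (by fun_prop) (fun x hx ↦ by simp [hσ_sphere x hx, h0, h'0])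
    (continuousOn_greenTermWithin hD hu hσ hh hh' hh'' i) fun x hx ↦ ?_
  rw [← hDint] at hx
  exact hasLineDerivAt_greenFlux ((hu.of_le one_le_two).hasLineDerivAt_pdWithin hx i)
    ((hσ.of_le one_le_two).hasLineDerivAt_pdWithin hx i) (hP.hasLineDerivAt_pdWithin hx i)
    (hQ.hasLineDerivAt_pdWithin hx i) (hh _) (hh' _)

theorem integrableOn_ball_greenIntegrand_and_integral_eq_zero (hr : 0 < r)
    (hu : ContDiffOn ℝ 2 u (closedBall c r)) (hσ : ContDiffOn ℝ 2 σ (closedBall c r))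
    (hσ_sphere : ∀ x ∈ sphere c r, σ x = 0) (hh : ∀ t, HasDerivAt h (h' t) t)
    (hh' : ∀ t, HasDerivAt h' (h'' t) t) (hh'' : Continuous h'') (h0 : h 0 = 0)
    (h'0 : h' 0 = 0) :
    IntegrableOn (greenIntegrand h h' h'' u σ) (ball c r) ∧
      ∫ x in ball c r, greenIntegrand h h' h'' u σ x = 0 := by
  have hDint : interior (closedBall c r) = ball c r := interior_closedBall c hr.ne'
  have hD : UniqueDiffOn ℝ (closedBall c r) := uniqueDiffOn_closedBall c hr
  have hsum : EqOn (fun x ↦ ∑ i, greenTermWithin (closedBall c r) h h' h'' u σ i x)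
      (greenIntegrand h h' h'' u σ) (ball c r) := fun x hx ↦
    (greenIntegrand_eq_sum_greenTermWithin (hDint ▸ hx)).symm
  have hint (i : Fin n) : IntegrableOn (greenTermWithin (closedBall c r) h h' h'' u σ i)
      (ball c r) := (continuousOn_greenTermWithin hD hu hσ hh hh' hh'' i).integrableOn_ball
  refine ⟨IntegrableOn.congr_fun (integrable_finsetSum _ fun i _ ↦ hint i) hsum
    measurableSet_ball, ?_⟩
  rw [← setIntegral_congr_fun measurableSet_ball hsum, integral_finsetSum _ fun i _ ↦ hint i]
  simp [integral_ball_greenTermWithin_eq_zero hr hu hσ hσ_sphere hh hh' hh'' h0 h'0]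

end GreenIdentity

section Estimate

variable {n : ℕ} {c : EuclideanSpace ℝ (Fin n)} {r M c₀ c₁ : ℝ} {f : ℝ → ℝ}
  {u σ : EuclideanSpace ℝ (Fin n) → ℝ}

lemma le_greenIntegrand_of_eigenfunction {x : EuclideanSpace ℝ (Fin n)} (hσ_nonneg : 0 ≤ σ x)
    (hσ_le : σ x ≤ M) (hu_pos : 0 < u x) (hσ_eq : -lap σ x = c₀ / 2 * σ x)
    (hu_eq : -lap u x = f (u x)) (hf : c₀ * u x - c₁ ≤ f (u x)) :
    c₀ / 2 * (u x * σ x ^ 3) - c₁ * (3 * M * σ x ^ 2 - σ x ^ 3) ≤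
      greenIntegrand (fun s ↦ 3 * M * s ^ 2 - s ^ 3) (fun s ↦ 6 * M * s - 3 * s ^ 2)
        (fun s ↦ 6 * M - 6 * s) u σ x := by
  have hgrad : 0 ≤ ∑ i, pd i σ x ^ 2 := Finset.sum_nonneg fun i _ ↦ sq_nonneg _
  have hweight : 0 ≤ 3 * M * σ x ^ 2 - σ x ^ 3 := by nlinarith [sq_nonneg (σ x)]
  rw [greenIntegrand, ← neg_neg (lap σ x), hσ_eq, ← neg_neg (lap u x), hu_eq]
  nlinarith [mul_nonneg (mul_nonneg hu_pos.le (by linarith : 0 ≤ 6 * M - 6 * σ x)) hgrad,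
    mul_nonneg hweight (sub_nonneg.2 hf)]

theorem integral_mul_cube_le (hr : 0 < r) (hσ : ContDiffOn ℝ 2 σ (closedBall c r))
    (hσ_nonneg : ∀ x ∈ ball c r, 0 ≤ σ x) (hσ_le : ∀ x ∈ ball c r, σ x ≤ M)
    (hσ_sphere : ∀ x ∈ sphere c r, σ x = 0) (hσ_eq : ∀ x ∈ ball c r, -lap σ x = c₀ / 2 * σ x)
    (hf : ∀ s > 0, c₀ * s - c₁ ≤ f s) (hu : ContDiffOn ℝ 2 u (closedBall c r))
    (hu_pos : ∀ x ∈ ball c r, 0 < u x) (hu_eq : ∀ x ∈ ball c r, -lap u x = f (u x)) :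
    c₀ / 2 * ∫ x in ball c r, u x * σ x ^ 3 ≤
      c₁ * ∫ x in ball c r, (3 * M * σ x ^ 2 - σ x ^ 3) := by
  obtain ⟨hgreen_int, hgreen⟩ := integrableOn_ball_greenIntegrand_and_integral_eq_zero
    (h := fun s ↦ 3 * M * s ^ 2 - s ^ 3) (h' := fun s ↦ 6 * M * s - 3 * s ^ 2)
    (h'' := fun s ↦ 6 * M - 6 * s) hr hu hσ hσ_sphere
    (fun s ↦ (((hasDerivAt_pow 2 s).const_mul (3 * M)).sub (hasDerivAt_pow 3 s)).congr_deriv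
      (by ring))
    (fun s ↦ (((hasDerivAt_id s).const_mul (6 * M)).sub
      ((hasDerivAt_pow 2 s).const_mul 3)).congr_deriv (by ring))
    (by fun_prop) (by simp) (by simp)
  have hσ_cont := hσ.continuousOn
  have hu_cont := hu.continuousOn
  have h1 : IntegrableOn (fun x ↦ u x * σ x ^ 3) (ball c r) :=
    ContinuousOn.integrableOn_ball (by fun_prop)
  have h2 : IntegrableOn (fun x ↦ 3 * M * σ x ^ 2 - σ x ^ 3) (ball c r) :=
    ContinuousOn.integrableOn_ball (by fun_prop)
  rw [← sub_nonpos]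
  calc (c₀ / 2 * ∫ x in ball c r, u x * σ x ^ 3) -
        c₁ * ∫ x in ball c r, (3 * M * σ x ^ 2 - σ x ^ 3)
      = ∫ x in ball c r, (c₀ / 2 * (u x * σ x ^ 3) - c₁ * (3 * M * σ x ^ 2 - σ x ^ 3)) := by
        rw [integral_sub (h1.const_mul _) (h2.const_mul _), integral_const_mul,
          integral_const_mul]
    _ ≤ ∫ x in ball c r, greenIntegrand _ _ _ u σ x :=
        setIntegral_mono_on (ContinuousOn.integrableOn_ball (by fun_prop)) hgreen_int
          measurableSet_ball fun x hx ↦ le_greenIntegrand_of_eigenfunction (hσ_nonneg x hx)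
            (hσ_le x hx) (hu_pos x hx) (hσ_eq x hx) (hu_eq x hx) (hf _ (hu_pos x hx))
    _ = 0 := hgreen

theorem integral_ball_le (hc₀ : 0 < c₀) (hc₁ : 0 ≤ c₁) (hr : 0 < r) {ρ δ : ℝ} (hρ : ρ ≤ r)
    (hδ : 0 < δ) (hσ : ContDiffOn ℝ 2 σ (closedBall c r)) (hσ_nonneg : ∀ x ∈ ball c r, 0 ≤ σ x)
    (hσ_le : ∀ x ∈ ball c r, σ x ≤ M) (hσ_ge : ∀ x ∈ ball c ρ, δ ≤ σ x)
    (hσ_sphere : ∀ x ∈ sphere c r, σ x = 0) (hσ_eq : ∀ x ∈ ball c r, -lap σ x = c₀ / 2 * σ x)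
    (hf : ∀ s > 0, c₀ * s - c₁ ≤ f s) (hu : ContDiffOn ℝ 2 u (closedBall c r))
    (hu_pos : ∀ x ∈ ball c r, 0 < u x) (hu_eq : ∀ x ∈ ball c r, -lap u x = f (u x)) :
    ∫ x in ball c ρ, u x ≤ 6 * c₁ * M ^ 3 * volume.real (ball c r) / (c₀ * δ ^ 3) := by
  have hsub : ball c ρ ⊆ ball c r := ball_subset_ball hρ
  have hσ_cont := hσ.continuousOn
  have hu_cont := hu.continuousOn
  have hcube_int : IntegrableOn (fun x ↦ u x * σ x ^ 3) (ball c r) :=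
    ContinuousOn.integrableOn_ball (by fun_prop)
  have hweight : ∫ x in ball c r, (3 * M * σ x ^ 2 - σ x ^ 3) ≤
      volume.real (ball c r) * (3 * M ^ 3) := by
    refine (setIntegral_mono_on (ContinuousOn.integrableOn_ball (by fun_prop))
      (integrableOn_const measure_ball_lt_top.ne) measurableSet_ball fun x hx ↦ ?_).trans_eq
      (setIntegral_const _)
    have h0 := hσ_nonneg x hx
    have hM := hσ_le x hx
    nlinarith [mul_le_mul hM hM h0 (h0.trans hM), pow_nonneg h0 3]
  have hcube : δ ^ 3 * ∫ x in ball c ρ, u x ≤ ∫ x in ball c r, u x * σ x ^ 3 := by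
    rw [← integral_const_mul]
    refine (setIntegral_mono_on ((hu_cont.integrableOn_ball.mono_set hsub).const_mul _)
      (hcube_int.mono_set hsub) measurableSet_ball fun x hx ↦ ?_).trans
      (setIntegral_mono_set hcube_int ?_ hsub.eventuallyLE)
    · rw [mul_comm]
      exact mul_le_mul_of_nonneg_left (pow_le_pow_left₀ hδ.le (hσ_ge x hx) 3)
        (hu_pos x (hsub hx)).le
    · filter_upwards [ae_restrict_mem measurableSet_ball] with x hx
      exact mul_nonneg (hu_pos x hx).le (pow_nonneg (hσ_nonneg x hx) 3)
  have hmain := integral_mul_cube_le hr hσ hσ_nonneg hσ_le hσ_sphere hσ_eq hf hu hu_pos hu_eq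
  rw [le_div_iff₀ (by positivity)]
  calc (∫ x in ball c ρ, u x) * (c₀ * δ ^ 3) = c₀ * (δ ^ 3 * ∫ x in ball c ρ, u x) := by ring
    _ ≤ c₀ * ∫ x in ball c r, u x * σ x ^ 3 := by gcongr
    _ ≤ 2 * (c₁ * ∫ x in ball c r, (3 * M * σ x ^ 2 - σ x ^ 3)) := by linarith
    _ ≤ 2 * (c₁ * (volume.real (ball c r) * (3 * M ^ 3))) := by gcongr
    _ = 6 * c₁ * M ^ 3 * volume.real (ball c r) := by ring

end Estimate

/-- Local integral bound: if `λ₁(B_{2R₀}) = c₀/2` (witnessed by a positive principal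
eigenfunction `φ` with eigenvalue `c₀/2`) then every positive C² solution of `-Δu = f(u)` on
a closed ball of radius `2R₀`, with `f(s) ≥ c₀ s - c₁` for `s > 0`, satisfies
`∫_{B_{R₀}(x₀)} u ≤ C` with `C` depending only on `c₀, c₁, n`. -/
theorem stmt11 {n : ℕ} (c₀ c₁ R₀ : ℝ) (hc₀ : 0 < c₀) (hc₁ : 0 < c₁) (hR₀ : 0 < R₀)
    (φ : EuclideanSpace ℝ (Fin n) → ℝ)
    (hφ : ContDiffOn ℝ 2 φ (Metric.closedBall 0 (2 * R₀)))
    (hφpos : ∀ x ∈ Metric.ball (0 : EuclideanSpace ℝ (Fin n)) (2 * R₀), 0 < φ x)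
    (hφ0 : ∀ x ∈ Metric.sphere (0 : EuclideanSpace ℝ (Fin n)) (2 * R₀), φ x = 0)
    (hφeq : ∀ x ∈ Metric.ball (0 : EuclideanSpace ℝ (Fin n)) (2 * R₀),
      -lap φ x = (c₀ / 2) * φ x) :
    ∃ C : ℝ, ∀ (x₀ : EuclideanSpace ℝ (Fin n)) (f : ℝ → ℝ)
      (u : EuclideanSpace ℝ (Fin n) → ℝ),
      (∀ s > (0 : ℝ), c₀ * s - c₁ ≤ f s) →
      ContDiffOn ℝ 2 u (Metric.closedBall x₀ (2 * R₀)) →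
      (∀ x ∈ Metric.closedBall x₀ (2 * R₀), 0 < u x) →
      (∀ x ∈ Metric.ball x₀ (2 * R₀), -lap u x = f (u x)) →
      ∫ x in Metric.ball x₀ R₀, u x ≤ C := by
  have hR : R₀ < 2 * R₀ := by linarith
  obtain ⟨xM, -, hxM⟩ := (isCompact_closedBall (0 : EuclideanSpace ℝ (Fin n)) (2 * R₀))
    |>.exists_isMaxOn (nonempty_closedBall.2 (by linarith)) hφ.continuousOn
  obtain ⟨xδ, hxδ, hxδ_min⟩ := (isCompact_closedBall (0 : EuclideanSpace ℝ (Fin n)) R₀)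
    |>.exists_isMinOn (nonempty_closedBall.2 hR₀.le)
      (hφ.continuousOn.mono (closedBall_subset_closedBall hR.le))
  refine ⟨6 * c₁ * φ xM ^ 3 * volume.real (ball (0 : EuclideanSpace ℝ (Fin n)) (2 * R₀)) /
    (c₀ * φ xδ ^ 3), fun x₀ f u hf hu hu_pos hu_eq ↦ ?_⟩
  have hball : MapsTo (· + x₀) (ball 0 (2 * R₀)) (ball x₀ (2 * R₀)) := fun y hy ↦ by
    simpa [mem_ball_iff_norm] using hy
  have hclosedBall : MapsTo (· + x₀) (closedBall 0 (2 * R₀)) (closedBall x₀ (2 * R₀)) :=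
    fun y hy ↦ by simpa [mem_closedBall_iff_norm] using hy
  rw [← setIntegral_ball_comp_add_right]
  exact integral_ball_le hc₀ hc₁.le (by linarith) hR.le (hφpos xδ (closedBall_subset_ball hR hxδ))
    hφ (fun x hx ↦ (hφpos x hx).le) (fun x hx ↦ hxM (ball_subset_closedBall hx))
    (fun x hx ↦ hxδ_min (ball_subset_closedBall hx)) hφ0 hφeq hf (hu.comp (by fun_prop) hclosedBall)
    (fun x hx ↦ hu_pos _ (hclosedBall (ball_subset_closedBall hx)))
    (fun x hx ↦ by rw [lap_comp_add_right]; exact hu_eq _ (hball hx))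
end

section
/- Let f : (0,∞) → ℝ satisfy f(s) ≥ c₀ s - c₁ for some c₀, c₁ > 0. Then there is no function u ∈ C²(closure of the half-space ℝⁿ₊) satisfying -Δu = f(u) in ℝⁿ₊, u = 0 on ∂ℝⁿ₊, uₓₙ > 0 on the closed half-space, and uₓₙₓₙ ≥ 0 on the closed half-space. -/
/-!
Convexity in `xₙ` puts `u` above its tangent lines along vertical rays, and `∂ₙu` has a positive
minimum on a compact piece of the hyperplane `xₙ = 1`, so `u` grows linearly in `xₙ`; in particular
`u` is as large as we like on a cube of side `π / ε` placed high enough. The cube carries the first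
Dirichlet eigenfunction `φ = ∏ⱼ cos (ε (xⱼ - cⱼ))`, with `-Δφ = (n + 1) ε² φ`. At a maximum point of
`φ / u` on the cube, which is interior because `φ` vanishes on the boundary, `φ - μ u` has a local
maximum, whence `-Δu ≤ (n + 1) ε² u` there. With `(n + 1) ε² = c₀ / 2` this contradicts
`-Δu = f(u) ≥ c₀ u - c₁` as soon as `u > 2 c₁ / c₀`.
-/

open Metric MeasureTheory Set

open Filter Topology Real

/-- Otherwise the second-derivative test makes `t` also a local minimum, so `h` is locally constant
and `h'' t = 0`. -/
theorem IsLocalMax.deriv_deriv_nonpos {h : ℝ → ℝ} {t : ℝ} (hmax : IsLocalMax h t)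
    (hc : ContinuousAt h t) : deriv (deriv h) t ≤ 0 := by
  by_contra! hpos
  have hconst : h =ᶠ[𝓝 t] fun _ => h t :=
    (hmax.and (isLocalMin_of_deriv_deriv_pos hpos hmax.deriv_eq_zero hc)).mono
      fun s hs => le_antisymm hs.1 hs.2
  have hderiv : deriv h =ᶠ[𝓝 t] fun _ => 0 :=
    hconst.eventuallyEq_nhds.mono fun s hs => by rw [hs.deriv_eq, deriv_const]
  simp [hderiv.deriv_eq] at hpos

theorem hasDerivAt_comp_add_smul {F : Type*} [NormedAddCommGroup F] [NormedSpace ℝ F]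
    {g : F → ℝ} {x v : F} {t : ℝ} (hg : DifferentiableAt ℝ g (x + t • v)) :
    HasDerivAt (fun s => g (x + s • v)) (fderiv ℝ g (x + t • v) v) t :=
  hg.hasFDerivAt.comp_hasDerivAt t (by simpa using ((hasDerivAt_id t).smul_const v).const_add x)

theorem tendsto_add_smul_nhds_zero {F : Type*} [NormedAddCommGroup F] [NormedSpace ℝ F]
    (x v : F) : Tendsto (fun t : ℝ => x + t • v) (𝓝 0) (𝓝 x) := by
  simpa using (Continuous.tendsto (f := fun t : ℝ => x + t • v) (by fun_prop) 0)

section PartialDerivatives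

variable {m : ℕ} {g φ : EuclideanSpace ℝ (Fin m) → ℝ} {x : EuclideanSpace ℝ (Fin m)}

theorem differentiableAt_pd (hg : ContDiffAt ℝ 2 g x) (i : Fin m) :
    DifferentiableAt ℝ (pd i g) x :=
  ((hg.fderiv_right (m := 1) (by norm_num)).differentiableAt one_ne_zero).clm_apply
    (differentiableAt_const _)

theorem pd_pd_eq_deriv_deriv (hg : ContDiffAt ℝ 2 g x) (i : Fin m) :
    pd i (pd i g) x = deriv (deriv fun t : ℝ => g (x + t • EuclideanSpace.single i 1)) 0 := by
  have hderiv : deriv (fun t : ℝ => g (x + t • EuclideanSpace.single i 1))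
      =ᶠ[𝓝 0] fun t => pd i g (x + t • EuclideanSpace.single i 1) :=
    ((tendsto_add_smul_nhds_zero x _).eventually (hg.eventually (by simp))).mono fun t ht =>
      (hasDerivAt_comp_add_smul (ht.differentiableAt (by norm_num))).deriv
  rw [hderiv.deriv_eq]
  have h := hasDerivAt_comp_add_smul (x := x) (v := EuclideanSpace.single i 1) (t := 0)
    (g := pd i g) (by simpa using differentiableAt_pd hg i)
  simpa [pd] using h.deriv.symm

theorem pd_pd_nonpos_of_isLocalMax (hg : ContDiffAt ℝ 2 g x) (hmax : IsLocalMax g x) (i : Fin m) :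
    pd i (pd i g) x ≤ 0 := by
  have hx : x = x + (0 : ℝ) • EuclideanSpace.single i 1 := by simp
  rw [pd_pd_eq_deriv_deriv hg]
  rw [hx] at hmax hg
  exact IsLocalMax.deriv_deriv_nonpos
    (hmax.comp_continuous (g := fun t : ℝ => x + t • EuclideanSpace.single i 1) (by fun_prop))
    (hg.continuousAt.comp (f := fun t : ℝ => x + t • EuclideanSpace.single i 1) (by fun_prop))

theorem lap_nonpos_of_isLocalMax (hg : ContDiffAt ℝ 2 g x) (hmax : IsLocalMax g x) :
    lap g x ≤ 0 :=
  Finset.sum_nonpos fun i _ => pd_pd_nonpos_of_isLocalMax hg hmax i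

theorem pd_sub_const_mul (hφ : DifferentiableAt ℝ φ x) (hg : DifferentiableAt ℝ g x) (μ : ℝ)
    (i : Fin m) : pd i (fun y => φ y - μ * g y) x = pd i φ x - μ * pd i g x := by
  simp [pd, fderiv_fun_sub hφ (hg.const_mul μ), fderiv_const_mul hg]

theorem lap_sub_const_mul (hφ : ContDiffAt ℝ 2 φ x) (hg : ContDiffAt ℝ 2 g x) (μ : ℝ) :
    lap (fun y => φ y - μ * g y) x = lap φ x - μ * lap g x := by
  have hpd (i : Fin m) : pd i (fun y => φ y - μ * g y) =ᶠ[𝓝 x]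
      fun y => pd i φ y - μ * pd i g y :=
    ((hφ.eventually (by simp)).and (hg.eventually (by simp))).mono fun y hy =>
      pd_sub_const_mul (hy.1.differentiableAt (by norm_num))
        (hy.2.differentiableAt (by norm_num)) μ i
  simp only [lap, Finset.mul_sum, ← Finset.sum_sub_distrib]
  refine Finset.sum_congr rfl fun i _ => ?_
  rw [pd, (hpd i).fderiv_eq]
  exact pd_sub_const_mul (differentiableAt_pd hφ i) (differentiableAt_pd hg i) μ i

end PartialDerivatives

section Cube

variable {m : ℕ}

def cube (c : EuclideanSpace ℝ (Fin m)) (r : ℝ) : Set (EuclideanSpace ℝ (Fin m)) :=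
  {x | ∀ j, |x j - c j| ≤ r}

theorem isCompact_setOf_forall_apply_mem {s : Fin m → Set ℝ} (hs : ∀ j, IsCompact (s j)) :
    IsCompact {x : EuclideanSpace ℝ (Fin m) | ∀ j, x j ∈ s j} := by
  convert (EuclideanSpace.equiv (Fin m) ℝ).toHomeomorph.isCompact_preimage.mpr
    (isCompact_univ_pi hs) using 1
  ext x
  simp

theorem isCompact_cube (c : EuclideanSpace ℝ (Fin m)) (r : ℝ) : IsCompact (cube c r) := by
  simpa [cube, Real.dist_eq] using
    isCompact_setOf_forall_apply_mem fun j => isCompact_closedBall (c j) r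

theorem isOpen_setOf_forall_abs_sub_lt (c : EuclideanSpace ℝ (Fin m)) (r : ℝ) :
    IsOpen {x : EuclideanSpace ℝ (Fin m) | ∀ j, |x j - c j| < r} := by
  simp only [ofPred_forall]
  exact isOpen_iInter_of_finite fun j => isOpen_lt (by fun_prop) continuous_const

end Cube

section CubeEigenfunction

variable {m : ℕ} (ε : ℝ) (c : EuclideanSpace ℝ (Fin m))

noncomputable def cubeEigenfunction (x : EuclideanSpace ℝ (Fin m)) : ℝ := ∏ j, cos (ε * (x j - c j))

theorem contDiff_cubeEigenfunction : ContDiff ℝ 2 (cubeEigenfunction ε c) := by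
  unfold cubeEigenfunction; fun_prop

@[simp]
theorem cubeEigenfunction_self : cubeEigenfunction ε c c = 1 := by
  simp [cubeEigenfunction]

theorem cubeEigenfunction_add_smul_single (x : EuclideanSpace ℝ (Fin m)) (i : Fin m) (t : ℝ) :
    cubeEigenfunction ε c (x + t • EuclideanSpace.single i 1) =
      cos (ε * (x i - c i) + ε * t) * ∏ j ∈ Finset.univ.erase i, cos (ε * (x j - c j)) := by
  rw [cubeEigenfunction, ← Finset.mul_prod_erase _ _ (Finset.mem_univ i)]
  congr 1
  · simp only [PiLp.add_apply, PiLp.smul_apply, PiLp.single_eq_same, smul_eq_mul, mul_one]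
    ring_nf
  · refine Finset.prod_congr rfl fun j hj => ?_
    simp [Finset.ne_of_mem_erase hj]

theorem pd_pd_cubeEigenfunction (x : EuclideanSpace ℝ (Fin m)) (i : Fin m) :
    pd i (pd i (cubeEigenfunction ε c)) x = -ε ^ 2 * cubeEigenfunction ε c x := by
  set a := ε * (x i - c i)
  set P := ∏ j ∈ Finset.univ.erase i, cos (ε * (x j - c j))
  have hcos (t : ℝ) : HasDerivAt (fun t => cos (a + ε * t) * P) (-(sin (a + ε * t) * ε) * P) t := by
    simpa using (((hasDerivAt_id t).const_mul ε).const_add a).cos.mul_const P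
  have hsin : HasDerivAt (fun t => -(sin (a + ε * t) * ε) * P) (-(cos a * ε * ε) * P) 0 := by
    simpa using ((((hasDerivAt_id (0:ℝ)).const_mul ε).const_add a).sin.mul_const ε).neg.mul_const P
  rw [pd_pd_eq_deriv_deriv ((contDiff_cubeEigenfunction ε c).contDiffAt),
    funext (cubeEigenfunction_add_smul_single ε c x i), funext fun t => (hcos t).deriv,
    hsin.deriv, show cubeEigenfunction ε c x = cos a * P by
      simpa using cubeEigenfunction_add_smul_single ε c x i 0]
  ring

theorem lap_cubeEigenfunction (x : EuclideanSpace ℝ (Fin m)) :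
    lap (cubeEigenfunction ε c) x = -(m * ε ^ 2) * cubeEigenfunction ε c x := by
  simp only [lap, pd_pd_cubeEigenfunction, Finset.sum_const, Finset.card_univ, Fintype.card_fin,
    nsmul_eq_mul]
  ring

theorem cubeEigenfunction_eq_zero {x : EuclideanSpace ℝ (Fin m)} {j : Fin m} (hε : 0 < ε)
    (hj : |x j - c j| = π / (2 * ε)) : cubeEigenfunction ε c x = 0 := by
  refine Finset.prod_eq_zero (Finset.mem_univ j) ?_
  have hεr : ε * (π / (2 * ε)) = π / 2 := by field_simp
  rw [← cos_abs, abs_mul, hj, abs_of_pos hε, hεr, cos_pi_div_two]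

end CubeEigenfunction

theorem exists_mem_cube_neg_lap_le {m : ℕ} {u : EuclideanSpace ℝ (Fin m) → ℝ} {ε : ℝ}
    (hε : 0 < ε) (c : EuclideanSpace ℝ (Fin m))
    (hu : ∀ x ∈ cube c (π / (2 * ε)), ContDiffAt ℝ 2 u x)
    (hpos : ∀ x ∈ cube c (π / (2 * ε)), 0 < u x) :
    ∃ x ∈ cube c (π / (2 * ε)), -lap u x ≤ m * ε ^ 2 * u x := by
  set r := π / (2 * ε)
  set φ := cubeEigenfunction ε c
  have hφ : ContDiff ℝ 2 φ := contDiff_cubeEigenfunction ε c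
  have hc : c ∈ cube c r := fun j => by rw [sub_self, abs_zero]; positivity
  obtain ⟨x, hx, hmax⟩ := (isCompact_cube c r).exists_isMaxOn ⟨c, hc⟩
    (hφ.continuous.continuousOn.div (fun y hy => (hu y hy).continuousAt.continuousWithinAt)
      fun y hy => (hpos y hy).ne')
  set μ := φ x / u x
  have hμ : 0 < μ := (div_pos one_pos (hpos c hc)).trans_le (by simpa [φ] using hmax hc)
  have hφx : φ x = μ * u x := (div_mul_cancel₀ _ (hpos x hx).ne').symm
  have hinterior (j : Fin m) : |x j - c j| < r := by
    refine (hx j).lt_of_ne fun h => ?_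
    have := cubeEigenfunction_eq_zero ε c hε h
    nlinarith [hpos x hx]
  have hlocmax : IsLocalMax (fun y => φ y - μ * u y) x := by
    filter_upwards [(isOpen_setOf_forall_abs_sub_lt c r).mem_nhds hinterior] with y hy
    have hy : y ∈ cube c r := fun j => (hy j).le
    have hle : φ y / u y ≤ μ := hmax hy
    rw [div_le_iff₀ (hpos y hy)] at hle
    simp only [hφx, sub_self]
    linarith
  have hlap := lap_nonpos_of_isLocalMax (hφ.contDiffAt.sub (contDiffAt_const.mul (hu x hx)))
    hlocmax
  rw [lap_sub_const_mul hφ.contDiffAt (hu x hx), lap_cubeEigenfunction,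
    show cubeEigenfunction ε c x = μ * u x from hφx] at hlap
  exact ⟨x, hx, le_of_mul_le_mul_left (by linarith) hμ⟩

section Growth

variable {m : ℕ} {u : EuclideanSpace ℝ (Fin m) → ℝ}

theorem add_pd_mul_le_of_pd_pd_nonneg (k : Fin m) {p : EuclideanSpace ℝ (Fin m)}
    (hu : ∀ t : ℝ, 0 ≤ t → ContDiffAt ℝ 2 u (p + t • EuclideanSpace.single k 1))
    (hconv : ∀ t : ℝ, 0 < t → 0 ≤ pd k (pd k u) (p + t • EuclideanSpace.single k 1))
    {t : ℝ} (ht : 0 ≤ t) : u p + pd k u p * t ≤ u (p + t • EuclideanSpace.single k 1) := by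
  set h := fun s : ℝ => u (p + s • EuclideanSpace.single k 1)
  have hd (s : ℝ) (hs : 0 ≤ s) : HasDerivAt h (pd k u (p + s • EuclideanSpace.single k 1)) s :=
    hasDerivAt_comp_add_smul ((hu s hs).differentiableAt (by norm_num))
  have hd2 (s : ℝ) (hs : 0 ≤ s) :
      HasDerivAt (fun s : ℝ => pd k u (p + s • EuclideanSpace.single k 1))
      (pd k (pd k u) (p + s • EuclideanSpace.single k 1)) s :=
    hasDerivAt_comp_add_smul (differentiableAt_pd (hu s hs) k)
  have hconvex : ConvexOn ℝ (Ici 0) h := by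
    refine convexOn_of_hasDerivWithinAt2_nonneg (convex_Ici 0)
      (f' := fun s => pd k u (p + s • EuclideanSpace.single k 1))
      (f'' := fun s => pd k (pd k u) (p + s • EuclideanSpace.single k 1))
      (fun s hs => (hd s hs).continuousAt.continuousWithinAt) (fun s hs => ?_) (fun s hs => ?_)
      (fun s hs => ?_) <;> simp only [interior_Ici] at hs ⊢
    · exact (hd s (le_of_lt hs)).hasDerivWithinAt
    · exact (hd2 s (le_of_lt hs)).hasDerivWithinAt
    · exact hconv s hs
  rcases ht.eq_or_lt with rfl | ht
  · simp
  have hslope := hconvex.le_slope_of_hasDerivAt self_mem_Ici ht.le ht (hd 0 le_rfl)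
  rw [slope_def_field, le_div_iff₀ (by simpa using ht)] at hslope
  simp only [h, sub_zero, zero_smul, add_zero] at hslope
  linarith

theorem exists_pos_linear_lower_bound (k : Fin m) (a r : ℝ)
    (hu : ∀ x, a ≤ x k → ContDiffAt ℝ 2 u x)
    (hmono : ∀ x, x k = a → 0 < pd k u x)
    (hconv : ∀ x, a < x k → 0 ≤ pd k (pd k u) x) :
    ∃ η > 0, ∃ M, ∀ x, (∀ j ≠ k, |x j| ≤ r) → a ≤ x k → M + η * (x k - a) ≤ u x := by
  set S := {p : EuclideanSpace ℝ (Fin m) | ∀ j, p j ∈ if j = k then {a} else Icc (-r) r}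
  have hS : IsCompact S := isCompact_setOf_forall_apply_mem fun j => by
    split_ifs
    exacts [isCompact_singleton, isCompact_Icc]
  have hSk (p : EuclideanSpace ℝ (Fin m)) (hp : p ∈ S) : p k = a := by simpa using hp k
  obtain ⟨η, hη, hηS⟩ := hS.exists_forall_le'
    (fun p hp => (differentiableAt_pd (hu p (hSk p hp).ge) k).continuousAt.continuousWithinAt)
    (fun p hp => hmono p (hSk p hp))
  obtain ⟨M, hM⟩ := hS.bddBelow_image
    (fun p hp => (hu p (hSk p hp).ge).continuousAt.continuousWithinAt)
  refine ⟨η, hη, M, fun x hx hxk => ?_⟩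
  set p := x - (x k - a) • EuclideanSpace.single k 1
  have hp : p ∈ S := fun j => by
    by_cases hj : j = k
    · subst hj; simp [p]
    · simpa [p, hj, abs_le] using hx j hj
  have hle := add_pd_mul_le_of_pd_pd_nonneg k (p := p) (fun t ht => hu _ (by simpa [p] using ht))
    (fun t ht => hconv _ (by simpa [p] using ht)) (sub_nonneg.mpr hxk)
  rw [show p + (x k - a) • EuclideanSpace.single k 1 = x by simp [p]] at hle
  nlinarith [hM ⟨p, hp, rfl⟩, hηS p hp]

theorem exists_cube_forall_lt (k : Fin m) (a r B : ℝ)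
    (hu : ∀ x, a ≤ x k → ContDiffAt ℝ 2 u x)
    (hmono : ∀ x, x k = a → 0 < pd k u x)
    (hconv : ∀ x, a < x k → 0 ≤ pd k (pd k u) x) :
    ∃ c, ∀ x ∈ cube c r, a ≤ x k ∧ B < u x := by
  obtain ⟨η, hη, M, hgrowth⟩ := exists_pos_linear_lower_bound k a r hu hmono hconv
  have hshift : 0 < (|M| + |B| + 1) / η := by positivity
  refine ⟨EuclideanSpace.single k (a + r + (|M| + |B| + 1) / η), fun x hx => ?_⟩
  have hxk : a + (|M| + |B| + 1) / η ≤ x k := by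
    have := abs_le.mp (hx k)
    simp only [PiLp.single_apply, if_true] at this
    linarith
  have hfar : |M| + |B| + 1 ≤ η * (x k - a) := by
    rw [← div_le_iff₀' hη]
    linarith
  have := hgrowth x (fun j hj => by simpa [hj] using hx j) (by linarith)
  exact ⟨by linarith, by linarith [neg_abs_le M, le_abs_self B]⟩

end Growth

theorem stmt12_general {n : ℕ} (c₀ c₁ : ℝ) (hc₀ : 0 < c₀)
    (f : ℝ → ℝ) (hf : ∀ s > (0 : ℝ), c₀ * s - c₁ ≤ f s)
    (u : EuclideanSpace ℝ (Fin (n + 1)) → ℝ)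
    (hu : ContDiffOn ℝ 2 u {x | 0 ≤ x (Fin.last n)})
    (heq : ∀ x, 0 < x (Fin.last n) → -lap u x = f (u x))
    (hmono : ∀ x, 0 ≤ x (Fin.last n) → 0 < pd (Fin.last n) u x)
    (hconv : ∀ x, 0 ≤ x (Fin.last n) → 0 ≤ pd (Fin.last n) (pd (Fin.last n) u) x) :
    False := by
  set k := Fin.last n
  have hC2 (x : EuclideanSpace ℝ (Fin (n + 1))) (hx : 0 < x k) : ContDiffAt ℝ 2 u x :=
    hu.contDiffAt <| mem_nhds_iff.mpr ⟨{y | 0 < y k}, fun y (hy : 0 < y k) => hy.le,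
      isOpen_lt continuous_const (by fun_prop), hx⟩
  obtain ⟨ε, hε, hε2⟩ : ∃ ε > 0, ((n + 1 : ℕ) : ℝ) * ε ^ 2 = c₀ / 2 :=
    ⟨√(c₀ / (2 * (n + 1))), by positivity, by rw [sq_sqrt (by positivity)]; push_cast; field_simp⟩
  obtain ⟨c, hc⟩ := exists_cube_forall_lt k 1 (π / (2 * ε)) (max 0 (2 * c₁ / c₀))
    (fun x hx => hC2 x (by linarith)) (fun x hx => hmono x (by linarith))
    (fun x hx => hconv x (by linarith))
  obtain ⟨x, hx, hlap⟩ := exists_mem_cube_neg_lap_le hε c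
    (fun x hx => hC2 x (by linarith [(hc x hx).1]))
    (fun x hx => (le_max_left _ _).trans_lt (hc x hx).2)
  obtain ⟨hxk, hux⟩ := hc x hx
  have hfu := hf (u x) ((le_max_left _ _).trans_lt hux)
  rw [← heq x (by linarith)] at hfu
  rw [hε2] at hlap
  have := (div_lt_iff₀ hc₀).mp ((le_max_right _ _).trans_lt hux)
  linarith

/-- Nonexistence in the half-space: if `f(s) ≥ c₀ s - c₁` with `c₀, c₁ > 0`, there is no
`u ∈ C²` of the closed half-space solving `-Δu = f(u)` in the open half-space, vanishing on
the boundary, with `uₓₙ > 0` and `uₓₙₓₙ ≥ 0` on the closed half-space. -/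
theorem stmt12 {n : ℕ} (c₀ c₁ : ℝ) (hc₀ : 0 < c₀) (hc₁ : 0 < c₁)
    (f : ℝ → ℝ) (hf : ∀ s > (0 : ℝ), c₀ * s - c₁ ≤ f s)
    (u : EuclideanSpace ℝ (Fin (n + 1)) → ℝ)
    (hu : ContDiffOn ℝ 2 u {x | 0 ≤ x (Fin.last n)})
    (heq : ∀ x, 0 < x (Fin.last n) → -lap u x = f (u x))
    (hbd : ∀ x, x (Fin.last n) = 0 → u x = 0)
    (hmono : ∀ x, 0 ≤ x (Fin.last n) → 0 < pd (Fin.last n) u x)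
    (hconv : ∀ x, 0 ≤ x (Fin.last n) → 0 ≤ pd (Fin.last n) (pd (Fin.last n) u) x) :
    False :=
  stmt12_general c₀ c₁ hc₀ f hf u hu heq hmono hconv
end
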